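/- arXiv:2408.09963 — 2 statements merged into one kernel-verified Lean document; each statement's English description precedes it below -/
import Mathlib

section
/- For integers d ≥ e ≥ i+1 ≥ 1, one has C_{d,e-1,i,q} · q^{e-1} · (q^{d-i} - 1) + C_{d,e-1,i+1,q} = C_{d,e,i+1,q}, where C_{d,e,s,q} = [d choose s]_q [e choose s]_q (q^s-1)(q^s-q)···(q^s-q^{s-1}). -/
/-!
Write `[n, k]` for `gaussBinom n k`, `e = e' + 1` and `P_s = ∏_{j<s} (q^s - q^j)`, so that
`P_{i+1} = (q^{i+1} - 1) q^i P_i`. The q-analogue `[n, k] (q^{n-k} - 1) = [n, k+1] (q^{k+1} - 1)`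
of `(n - k) C(n, k) = (k + 1) C(n, k+1)` turns the first summand into a multiple of
`[d, i+1] (q^{i+1} - 1) q^i P_i`, which is then a common factor of all three terms. What is
left is the second q-Pascal rule `[e'+1, i+1] = q^{e'-i} [e', i] + [e', i+1]`, itself the same
q-analogue combined with the defining recursion.
-/

open Polynomial

/-- The Gaussian binomial coefficient `[n choose k]_q` as a polynomial in `q`. -/
noncomputable def gaussBinom : ℕ → ℕ → Polynomial ℤ
  | _, 0 => 1
  | 0, _ + 1 => 0
  | n + 1, k + 1 => gaussBinom n k + X ^ (k + 1) * gaussBinom n (k + 1)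

/-- `C_{d,e,s,q} = [d choose s]_q [e choose s]_q (q^s-1)(q^s-q)⋯(q^s-q^{s-1})`. -/
noncomputable def Cpoly (d e s : ℕ) : Polynomial ℤ :=
  gaussBinom d s * gaussBinom e s *
    ∏ j ∈ Finset.range s, ((X : Polynomial ℤ) ^ s - X ^ j)

theorem Finset.prod_range_succ_pow_sub_pow {R : Type*} [CommRing R] (q : R) (s : ℕ) :
    ∏ j ∈ range (s + 1), (q ^ (s + 1) - q ^ j) =
      (q ^ (s + 1) - 1) * q ^ s * ∏ j ∈ range s, (q ^ s - q ^ j) := by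
  have factor_q (j : ℕ) : q ^ (s + 1) - q ^ (j + 1) = (q ^ s - q ^ j) * q := by ring
  simp only [prod_range_succ', factor_q, prod_mul_distrib, prod_const, card_range, pow_zero]
  ring

@[simp]
theorem gaussBinom_zero_right (n : ℕ) : gaussBinom n 0 = 1 := by
  cases n <;> rfl

theorem gaussBinom_succ_succ (n k : ℕ) :
    gaussBinom (n + 1) (k + 1) = gaussBinom n k + X ^ (k + 1) * gaussBinom n (k + 1) :=
  rfl

theorem gaussBinom_eq_zero_of_lt {n k : ℕ} (h : n < k) : gaussBinom n k = 0 := by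
  induction n generalizing k with
  | zero =>
    obtain ⟨k, rfl⟩ := Nat.exists_eq_succ_of_ne_zero h.ne'
    rfl
  | succ n ih =>
    obtain ⟨k, rfl⟩ := Nat.exists_eq_succ_of_ne_zero (Nat.ne_zero_of_lt h)
    rw [gaussBinom_succ_succ, ih (by omega), ih (by omega), mul_zero, add_zero]

theorem gaussBinom_succ_right_eq (n k : ℕ) :
    gaussBinom n (k + 1) * (X ^ (k + 1) - 1) = gaussBinom n k * (X ^ (n - k) - 1) := by
  induction n generalizing k with
  | zero => simp [gaussBinom_eq_zero_of_lt]
  | succ n ih =>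
    cases k with
    | zero =>
      have ih₀ := ih 0
      simp only [gaussBinom_succ_succ, gaussBinom_zero_right, Nat.sub_zero] at ih₀ ⊢
      linear_combination X * ih₀
    | succ k =>
      rw [gaussBinom_succ_succ, gaussBinom_succ_succ, Nat.add_sub_add_right]
      rcases Nat.lt_or_ge k n with hkn | hnk
      · have ihk := ih k
        rw [show n - k = n - (k + 1) + 1 by omega] at ihk ⊢
        linear_combination ihk + X ^ (k + 2) * ih (k + 1)
      · rw [gaussBinom_eq_zero_of_lt (show n < k + 1 by omega),
          gaussBinom_eq_zero_of_lt (show n < k + 2 by omega), show n - k = 0 by omega]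
        ring

theorem gaussBinom_succ_succ' (n k : ℕ) :
    gaussBinom (n + 1) (k + 1) = X ^ (n - k) * gaussBinom n k + gaussBinom n (k + 1) := by
  rw [gaussBinom_succ_succ]
  linear_combination gaussBinom_succ_right_eq n k

theorem Cpoly_recurrence_general (d e i : ℕ) (h1 : i + 1 ≤ e) :
    Cpoly d (e - 1) i * (X : Polynomial ℤ) ^ (e - 1) * ((X : Polynomial ℤ) ^ (d - i) - 1) +
      Cpoly d (e - 1) (i + 1) = Cpoly d e (i + 1) := by
  obtain ⟨m, rfl⟩ : ∃ m, e = i + m + 1 := ⟨e - (i + 1), by omega⟩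
  simp only [Cpoly, Nat.add_sub_cancel, pow_add X i m, Finset.prod_range_succ_pow_sub_pow,
    gaussBinom_succ_succ' (i + m) i, Nat.add_sub_cancel_left]
  linear_combination
    (gaussBinom (i + m) i * X ^ i * X ^ m * ∏ j ∈ Finset.range i, (X ^ i - X ^ j)) *
      (gaussBinom_succ_right_eq d i).symm

theorem Cpoly_recurrence (d e i : ℕ) (h1 : i + 1 ≤ e) (h2 : e ≤ d) :
    Cpoly d (e - 1) i * (X : Polynomial ℤ) ^ (e - 1) * ((X : Polynomial ℤ) ^ (d - i) - 1) +
      Cpoly d (e - 1) (i + 1) = Cpoly d e (i + 1) :=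
  Cpoly_recurrence_general d e i h1
end

section
/- Let G = ([n], E) be a graph, q a prime power, P a size-i independent set of G, and U ∈ Gr(i, n, q, G)_{P,Q} a totally-isotropic subspace of the graphical matrix space B_G whose lexicographically-first nonzero Plücker coordinate is at P and whose support set outside P is Q. If the induced subgraph G[P ∪ Q] contains a path between two distinct vertices u, v ∈ P, then no such U exists (i.e., Gr(i, n, q, G)_{P,Q} = ∅). -/
open Matrix

def elemAlt {F : Type} [Field F] {n : ℕ} (i j : Fin n) : Matrix (Fin n) (Fin n) F :=
  fun a b => if a = i ∧ b = j then 1 else if a = j ∧ b = i then -1 else 0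

noncomputable def graphSpace {n : ℕ} (F : Type) [Field F] (G : SimpleGraph (Fin n)) :
    Submodule F (Matrix (Fin n) (Fin n) F) :=
  Submodule.span F {M | ∃ i j, G.Adj i j ∧ M = elemAlt i j}

def IsTotallyIsotropic {F : Type} [Field F] {n : ℕ}
    (𝓑 : Submodule F (Matrix (Fin n) (Fin n) F)) (U : Submodule F (Fin n → F)) : Prop :=
  ∀ u ∈ U, ∀ v ∈ U, ∀ B ∈ 𝓑, u ⬝ᵥ B *ᵥ v = 0

/-- The Plücker coordinate of (the column span of) `T` at the set `R` is nonzero: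
some (equivalently any) `R`-indexed row submatrix of `T` is invertible. -/
def PluckerNonzero {F : Type} [Field F] {n i : ℕ} (T : Matrix (Fin n) (Fin i) F)
    (R : Finset (Fin n)) : Prop :=
  ∃ g : Fin i → Fin n, Function.Injective g ∧ Set.range g = ↑R ∧ (T.submatrix g id).det ≠ 0

/-- The lexicographic order on finite subsets of `[n]`, via sorted lists. -/
def LexLt {n : ℕ} (A B : Finset (Fin n)) : Prop :=
  List.Lex (· < ·) (A.sort (· ≤ ·)) (B.sort (· ≤ ·))

/-! An edge `{a, b}` of `G` puts `elemAlt a b` into `B_G`, and evaluating its form on two columns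
of `T` gives the `2 × 2` minor of `T` on rows `a, b`; so total isotropy makes all these minors
vanish, i.e. adjacent rows of `T` are proportional. Rows indexed by `P ∪ Q` are nonzero, so the
proportionality is by a unit and propagates along the path: rows `u` and `v` of `T` are
proportional, contradicting the invertibility of the `P`-row submatrix of `T`. -/

section

variable {F : Type} [Field F]

theorem elemAlt_eq_single_sub_single {n : ℕ} {a b : Fin n} (hab : a ≠ b) :
    (elemAlt a b : Matrix (Fin n) (Fin n) F) = single a b 1 - single b a 1 := by
  ext k l
  simp only [elemAlt, Matrix.sub_apply, single_apply]
  grind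

theorem dotProduct_elemAlt_mulVec {n : ℕ} {a b : Fin n} (hab : a ≠ b) (x y : Fin n → F) :
    x ⬝ᵥ elemAlt a b *ᵥ y = x a * y b - x b * y a := by
  simp only [elemAlt_eq_single_sub_single hab, sub_mulVec, single_mulVec_eq, one_mul,
    dotProduct_sub, dotProduct_smul, dotProduct_single, mul_one, smul_eq_mul]
  ring

theorem IsTotallyIsotropic.mul_sub_mul_eq_zero {n : ℕ} {G : SimpleGraph (Fin n)}
    {U : Submodule F (Fin n → F)} (hU : IsTotallyIsotropic (graphSpace F G) U)
    {x y : Fin n → F} (hx : x ∈ U) (hy : y ∈ U) {a b : Fin n} (hab : G.Adj a b) :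
    x a * y b - x b * y a = 0 := by
  rw [← dotProduct_elemAlt_mulVec hab.ne]
  exact hU x hx y hy _ (Submodule.subset_span ⟨a, b, hab, rfl⟩)

theorem orbitRel_units_of_mul_eq_mul {ι : Type*} {r s : ι → F} (hr : r ≠ 0) (hs : s ≠ 0)
    (h : ∀ c d, r c * s d = s c * r d) : MulAction.orbitRel Fˣ (ι → F) s r := by
  obtain ⟨c, hc⟩ : ∃ c, r c ≠ 0 := Function.ne_iff.1 hr
  have hs_eq : s = (s c / r c) • r := by
    ext d
    rw [Pi.smul_apply, smul_eq_mul, div_mul_eq_mul_div, eq_div_iff hc, ← h c d, mul_comm]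
  have hsc : s c ≠ 0 := fun hsc ↦ hs (by simpa [hsc] using hs_eq)
  exact ⟨Units.mk0 _ (div_ne_zero hsc hc), hs_eq.symm⟩

theorem IsTotallyIsotropic.orbitRel_units_of_adj {n i : ℕ} {G : SimpleGraph (Fin n)}
    {U : Submodule F (Fin n → F)} (hU : IsTotallyIsotropic (graphSpace F G) U)
    {T : Matrix (Fin n) (Fin i) F} (hT : ∀ c, Tᵀ c ∈ U) {a b : Fin n} (hab : G.Adj a b)
    (ha : T a ≠ 0) (hb : T b ≠ 0) : MulAction.orbitRel Fˣ (Fin i → F) (T a) (T b) :=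
  orbitRel_units_of_mul_eq_mul hb ha fun c d ↦
    (sub_eq_zero.1 (hU.mul_sub_mul_eq_zero (hT c) (hT d) hab)).symm

theorem SimpleGraph.Reachable.rel_of_adj {V α : Type*} {G : SimpleGraph V} (s : Setoid α)
    {f : V → α} (hf : ∀ ⦃x y⦄, G.Adj x y → s (f x) (f y)) {x y : V} (h : G.Reachable x y) :
    s (f x) (f y) := by
  obtain ⟨w⟩ := h
  induction w with
  | nil => exact s.refl _
  | cons hadj _ ih => exact s.trans (hf hadj) ih

theorem PluckerNonzero.linearIndepOn_row {n i : ℕ} {T : Matrix (Fin n) (Fin i) F}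
    {R : Finset (Fin n)} (hR : PluckerNonzero T R) : LinearIndepOn F T.row (R : Set (Fin n)) := by
  obtain ⟨g, hg, hrange, hdet⟩ := hR
  rw [← hrange, linearIndepOn_range_iff hg]
  exact linearIndependent_rows_of_det_ne_zero hdet

end

theorem grPQ_empty_of_path_general {F : Type} [Field F] {n i : ℕ}
    (G : SimpleGraph (Fin n)) (P Q : Finset (Fin n))
    (U : Submodule F (Fin n → F)) (T : Matrix (Fin n) (Fin i) F)
    (hspan : Submodule.span F (Set.range Tᵀ) = U)
    (htot : IsTotallyIsotropic (graphSpace F G) U)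
    (hP : PluckerNonzero T P)
    (hQ : ∀ j : Fin n, j ∈ Q ↔ j ∉ P ∧ T j ≠ 0)
    (u v : Fin n) (hu : u ∈ P) (hv : v ∈ P) (huv : u ≠ v)
    (hpath : (G.induce (↑(P ∪ Q) : Set (Fin n))).Reachable
        ⟨u, Finset.mem_coe.mpr (Finset.mem_union_left Q hu)⟩
        ⟨v, Finset.mem_coe.mpr (Finset.mem_union_left Q hv)⟩) :
    False := by
  have hrows := hP.linearIndepOn_row
  have hcols : ∀ c, Tᵀ c ∈ U := fun c ↦ hspan ▸ Submodule.subset_span ⟨c, rfl⟩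
  have hrow_ne : ∀ a ∈ P ∪ Q, T a ≠ 0 := by
    intro a ha
    rcases Finset.mem_union.1 ha with haP | haQ
    · exact hrows.ne_zero haP
    · exact ((hQ a).1 haQ).2
  obtain ⟨t, ht⟩ : MulAction.orbitRel Fˣ (Fin i → F) (T u) (T v) :=
    hpath.rel_of_adj (MulAction.orbitRel Fˣ _) (f := fun a : ↥(↑(P ∪ Q) : Set (Fin n)) ↦ T a)
      fun a b hab ↦ htot.orbitRel_units_of_adj hcols hab (hrow_ne a a.2) (hrow_ne b b.2)
  have hpair : LinearIndepOn F T.row {v, u} :=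
    hrows.mono (Set.insert_subset_iff.2 ⟨hv, Set.singleton_subset_iff.2 hu⟩)
  exact (linearIndepOn_pair_iff T.row huv.symm (hrows.ne_zero hv)).1 hpair t ht

/-- If the induced subgraph `G[P ∪ Q]` contains a path between two distinct vertices
`u, v ∈ P`, then there is no `i`-dimensional totally-isotropic subspace `U` of the
graphical matrix space `B_G` with `P_U = P` and `Q_U = Q`;
i.e. `Gr(i, n, q, G)_{P,Q} = ∅`. -/
theorem grPQ_empty_of_path {F : Type} [Field F] [Fintype F] {n i : ℕ}
    (G : SimpleGraph (Fin n)) (P Q : Finset (Fin n))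
    (hPcard : P.card = i) (hPind : ∀ a ∈ P, ∀ b ∈ P, ¬G.Adj a b)
    (U : Submodule F (Fin n → F)) (T : Matrix (Fin n) (Fin i) F)
    (hind : LinearIndependent F Tᵀ)
    (hspan : Submodule.span F (Set.range Tᵀ) = U)
    (htot : IsTotallyIsotropic (graphSpace F G) U)
    (hP : PluckerNonzero T P)
    (hlex : ∀ R : Finset (Fin n), R.card = i → PluckerNonzero T R → ¬LexLt R P)
    (hQ : ∀ j : Fin n, j ∈ Q ↔ j ∉ P ∧ T j ≠ 0)
    (u v : Fin n) (hu : u ∈ P) (hv : v ∈ P) (huv : u ≠ v)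
    (hpath : (G.induce (↑(P ∪ Q) : Set (Fin n))).Reachable
        ⟨u, Finset.mem_coe.mpr (Finset.mem_union_left Q hu)⟩
        ⟨v, Finset.mem_coe.mpr (Finset.mem_union_left Q hv)⟩) :
    False :=
  grPQ_empty_of_path_general G P Q U T hspan htot hP hQ u v hu hv huv hpath
end
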